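/- arXiv:2510.23150 — 2 statements merged into one kernel-verified Lean document; each statement's English description precedes it below -/
import Mathlib

section
/- Let R(ρ,δ) = [[1,ρ,δ],[ρ,1,ρ],[δ,ρ,1]] with δ ∈ [0,1), ρ ∈ (0,1), and ρ ≥ (1+δ)/2. Then over the simplex {w ∈ ℝ³ : wᵢ ≥ 0, w₁+w₂+w₃ = 1}, the vector w* = (1/2, 0, 1/2) minimizes w^T R(ρ,δ) w among all symmetric allocations (w₁ = w₃), with minimum value (1+δ)/2. -/
open Matrix

/-! With `u = 1 - 2w`, the variance of the symmetric allocation `(w, 1 - 2w, w)` exceeds that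
of the barbell by `u ((2ρ - 1 - δ)(1 - u) + u (1 - δ)/2)`, a product of nonnegative factors
when `2ρ ≥ 1 + δ` and `δ ≤ 1`. -/

def trendCorrelation (ρ δ : ℝ) : Matrix (Fin 3) (Fin 3) ℝ :=
  !![1, ρ, δ; ρ, 1, ρ; δ, ρ, 1]

lemma trendCorrelation_quadForm_symmetric (ρ δ a b : ℝ) :
    ![a, b, a] ⬝ᵥ (trendCorrelation ρ δ *ᵥ ![a, b, a]) =
      2 * (1 + δ) * a ^ 2 + b ^ 2 + 4 * ρ * a * b := by
  simp only [trendCorrelation, dotProduct, mulVec, Fin.sum_univ_three, cons_val_zero,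
    cons_val_one, cons_val_two, head_cons, tail_cons, of_apply]
  ring

lemma trendCorrelation_quadForm_barbell (ρ δ : ℝ) :
    ![1 / 2, 0, 1 / 2] ⬝ᵥ (trendCorrelation ρ δ *ᵥ ![1 / 2, 0, 1 / 2]) = (1 + δ) / 2 := by
  rw [trendCorrelation_quadForm_symmetric]
  ring

lemma trendCorrelation_quadForm_symmetric_sub_barbell (ρ δ w : ℝ) :
    ![w, 1 - 2 * w, w] ⬝ᵥ (trendCorrelation ρ δ *ᵥ ![w, 1 - 2 * w, w]) - (1 + δ) / 2 =
      (1 - 2 * w) * ((2 * ρ - (1 + δ)) * (2 * w) + (1 - 2 * w) * (1 - δ) / 2) := by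
  rw [trendCorrelation_quadForm_symmetric]
  ring

lemma barbell_le_trendCorrelation_quadForm_symmetric {ρ δ w : ℝ} (hδ : δ ≤ 1)
    (hρ : (1 + δ) / 2 ≤ ρ) (hw0 : 0 ≤ w) (hw1 : w ≤ 1 / 2) :
    (1 + δ) / 2 ≤ ![w, 1 - 2 * w, w] ⬝ᵥ (trendCorrelation ρ δ *ᵥ ![w, 1 - 2 * w, w]) := by
  have hgap := trendCorrelation_quadForm_symmetric_sub_barbell ρ δ w
  have hu : 0 ≤ 1 - 2 * w := by linarith
  have hnonneg : 0 ≤ (1 - 2 * w) * ((2 * ρ - (1 + δ)) * (2 * w) + (1 - 2 * w) * (1 - δ) / 2) :=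
    mul_nonneg hu (add_nonneg (mul_nonneg (by linarith) (by linarith))
      (div_nonneg (mul_nonneg hu (by linarith)) zero_le_two))
  linarith

theorem barbell_min_symmetric_general (ρ δ : ℝ) (hδ1 : δ < 1)
    (hρ : (1 + δ) / 2 ≤ ρ) :
    let R : Matrix (Fin 3) (Fin 3) ℝ := !![1, ρ, δ; ρ, 1, ρ; δ, ρ, 1]
    let wstar : Fin 3 → ℝ := ![1 / 2, 0, 1 / 2]
    (∀ i, 0 ≤ wstar i) ∧ (wstar 0 + wstar 1 + wstar 2 = 1) ∧
    wstar ⬝ᵥ (R *ᵥ wstar) = (1 + δ) / 2 ∧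
    (∀ w : ℝ, 0 ≤ w → w ≤ 1 / 2 →
      wstar ⬝ᵥ (R *ᵥ wstar) ≤
        (![w, 1 - 2 * w, w] : Fin 3 → ℝ) ⬝ᵥ (R *ᵥ ![w, 1 - 2 * w, w])) := by
  intro R wstar
  have hbarbell : wstar ⬝ᵥ (R *ᵥ wstar) = (1 + δ) / 2 := trendCorrelation_quadForm_barbell ρ δ
  refine ⟨?_, by norm_num [wstar, cons_val_two], hbarbell, fun w hw0 hw1 => ?_⟩
  · intro i
    fin_cases i <;> norm_num [wstar]
  · rw [hbarbell]
    exact barbell_le_trendCorrelation_quadForm_symmetric hδ1.le hρ hw0 hw1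

/-- Barbell allocation: for `δ ∈ [0,1)`, `ρ ∈ (0,1)` with `ρ ≥ (1+δ)/2`, the
vector `w* = (1/2, 0, 1/2)` lies in the simplex and minimizes `wᵀ R(ρ,δ) w`
among all symmetric allocations `(w, 1−2w, w)` with `w ∈ [0, 1/2]`, with
minimum value `(1+δ)/2`. -/
theorem barbell_min_symmetric (ρ δ : ℝ) (hδ0 : 0 ≤ δ) (hδ1 : δ < 1)
    (hρ0 : 0 < ρ) (hρ1 : ρ < 1) (hρ : (1 + δ) / 2 ≤ ρ) :
    let R : Matrix (Fin 3) (Fin 3) ℝ := !![1, ρ, δ; ρ, 1, ρ; δ, ρ, 1]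
    let wstar : Fin 3 → ℝ := ![1 / 2, 0, 1 / 2]
    (∀ i, 0 ≤ wstar i) ∧ (wstar 0 + wstar 1 + wstar 2 = 1) ∧
    wstar ⬝ᵥ (R *ᵥ wstar) = (1 + δ) / 2 ∧
    (∀ w : ℝ, 0 ≤ w → w ≤ 1 / 2 →
      wstar ⬝ᵥ (R *ᵥ wstar) ≤
        (![w, 1 - 2 * w, w] : Fin 3 → ℝ) ⬝ᵥ (R *ᵥ ![w, 1 - 2 * w, w])) :=
  barbell_min_symmetric_general ρ δ hδ1 hρ
end

section
/- Let R(ρ,δ) = [[1,ρ,δ],[ρ,1,ρ],[δ,ρ,1]] be positive definite with δ ∈ [0,1), ρ ∈ (0,1), and ρ ≥ (1+δ)/2. Then for every w in the full simplex {w ∈ ℝ³ : wᵢ ≥ 0, Σwᵢ = 1}, w^T R(ρ,δ) w ≥ (1+δ)/2, with equality iff w = (1/2, 0, 1/2). -/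
/-!
Restricted to the simplex, the excess of the quadratic form over its claimed minimum splits as
`w₁ ((w₀ + w₂)(2ρ - 1 - δ) + w₁ (1 - δ)/2) + (1 - δ)/2 · (w₀ - w₂)²`.
Both summands are nonnegative once `2ρ ≥ 1 + δ` and `δ < 1`; the first vanishes exactly when
`w₁ = 0` and the second exactly when `w₀ = w₂`, which on the simplex pins down `(1/2, 0, 1/2)`.
-/

open Matrix

namespace Barbell

def form (ρ δ a b c : ℝ) : ℝ :=
  a ^ 2 + b ^ 2 + c ^ 2 + 2 * ρ * (a * b + b * c) + 2 * δ * (a * c)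

theorem dotProduct_mulVec_eq_form (ρ δ : ℝ) (w : Fin 3 → ℝ) :
    w ⬝ᵥ ((!![1, ρ, δ; ρ, 1, ρ; δ, ρ, 1] : Matrix (Fin 3) (Fin 3) ℝ) *ᵥ w) =
      form ρ δ (w 0) (w 1) (w 2) := by
  simp only [form, mulVec, dotProduct, Fin.sum_univ_three, of_apply, cons_val', cons_val_zero,
    cons_val_one, cons_val_two, empty_val', cons_val_fin_one, Nat.succ_eq_add_one, Nat.reduceAdd,
    tail_cons, vecHead]
  ring

section Simplex

variable {ρ δ a b c : ℝ}

theorem form_sub_eq (h : a + b + c = 1) :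
    form ρ δ a b c - (1 + δ) / 2 =
      b * ((a + c) * (2 * ρ - 1 - δ) + b * (1 - δ) / 2) + (1 - δ) / 2 * (a - c) ^ 2 := by
  obtain rfl : c = 1 - a - b := by linarith
  unfold form
  ring

variable (hρ : (1 + δ) / 2 ≤ ρ) (ha : 0 ≤ a) (hb : 0 ≤ b) (hc : 0 ≤ c)
include hρ ha hb hc

theorem middleTerm_nonneg (hδ : δ ≤ 1) :
    0 ≤ b * ((a + c) * (2 * ρ - 1 - δ) + b * (1 - δ) / 2) := by
  have : 0 ≤ (a + c) * (2 * ρ - 1 - δ) := mul_nonneg (by linarith) (by linarith)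
  have : 0 ≤ b * (1 - δ) / 2 := by have := mul_nonneg hb (sub_nonneg.2 hδ); linarith
  positivity

theorem middleTerm_eq_zero_iff (hδ : δ < 1) :
    b * ((a + c) * (2 * ρ - 1 - δ) + b * (1 - δ) / 2) = 0 ↔ b = 0 := by
  refine ⟨fun h => ?_, fun h => by simp [h]⟩
  rcases mul_eq_zero.1 h with hb0 | hfactor
  · exact hb0
  · have : 0 ≤ (a + c) * (2 * ρ - 1 - δ) := mul_nonneg (by linarith) (by linarith)
    nlinarith

theorem half_one_add_le_form (hδ : δ ≤ 1) (h : a + b + c = 1) :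
    (1 + δ) / 2 ≤ form ρ δ a b c := by
  have := form_sub_eq (ρ := ρ) (δ := δ) h
  have := middleTerm_nonneg hρ ha hb hc hδ
  have : 0 ≤ (1 - δ) / 2 * (a - c) ^ 2 := mul_nonneg (by linarith) (sq_nonneg _)
  linarith

theorem form_eq_iff (hδ : δ < 1) (h : a + b + c = 1) :
    form ρ δ a b c = (1 + δ) / 2 ↔ b = 0 ∧ a = c := by
  have hδpos : 0 < (1 - δ) / 2 := by linarith
  rw [← sub_eq_zero, form_sub_eq h,
    add_eq_zero_iff_of_nonneg (middleTerm_nonneg hρ ha hb hc hδ.le)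
      (mul_nonneg hδpos.le (sq_nonneg _)),
    middleTerm_eq_zero_iff hρ ha hb hc hδ, mul_eq_zero, sq_eq_zero_iff, sub_eq_zero]
  simp [hδpos.ne']

end Simplex

theorem eq_half_zero_half_iff {w : Fin 3 → ℝ} (h : w 0 + w 1 + w 2 = 1) :
    w 1 = 0 ∧ w 0 = w 2 ↔ w = ![1 / 2, 0, 1 / 2] := by
  constructor
  · rintro ⟨h1, h02⟩
    ext i
    fin_cases i <;> simp <;> linarith
  · rintro rfl
    exact ⟨rfl, rfl⟩

end Barbell

open Barbell in
theorem barbell_full_simplex_general (ρ δ : ℝ) (hδ1 : δ < 1)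
    (hρ : (1 + δ) / 2 ≤ ρ) :
    let R : Matrix (Fin 3) (Fin 3) ℝ := !![1, ρ, δ; ρ, 1, ρ; δ, ρ, 1]
    ∀ w : Fin 3 → ℝ, (∀ i, 0 ≤ w i) → w 0 + w 1 + w 2 = 1 →
      ((1 + δ) / 2 ≤ w ⬝ᵥ (R *ᵥ w) ∧
        (w ⬝ᵥ (R *ᵥ w) = (1 + δ) / 2 ↔ w = ![1 / 2, 0, 1 / 2])) := by
  intro R w hw hsum
  rw [dotProduct_mulVec_eq_form, ← eq_half_zero_half_iff hsum]
  exact ⟨half_one_add_le_form hρ (hw 0) (hw 1) (hw 2) hδ1.le hsum,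
    form_eq_iff hρ (hw 0) (hw 1) (hw 2) hδ1 hsum⟩

/-- Full-simplex barbell theorem: for `R(ρ,δ)` positive definite with
`δ ∈ [0,1)`, `ρ ∈ (0,1)` and `ρ ≥ (1+δ)/2`, every `w` in the simplex satisfies
`wᵀ R w ≥ (1+δ)/2`, with equality iff `w = (1/2, 0, 1/2)`. -/
theorem barbell_full_simplex (ρ δ : ℝ) (hδ0 : 0 ≤ δ) (hδ1 : δ < 1)
    (hρ0 : 0 < ρ) (hρ1 : ρ < 1) (hρ : (1 + δ) / 2 ≤ ρ)
    (hPD : (!![1, ρ, δ; ρ, 1, ρ; δ, ρ, 1] : Matrix (Fin 3) (Fin 3) ℝ).PosDef) :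
    let R : Matrix (Fin 3) (Fin 3) ℝ := !![1, ρ, δ; ρ, 1, ρ; δ, ρ, 1]
    ∀ w : Fin 3 → ℝ, (∀ i, 0 ≤ w i) → w 0 + w 1 + w 2 = 1 →
      ((1 + δ) / 2 ≤ w ⬝ᵥ (R *ᵥ w) ∧
        (w ⬝ᵥ (R *ᵥ w) = (1 + δ) / 2 ↔ w = ![1 / 2, 0, 1 / 2])) :=
  barbell_full_simplex_general ρ δ hδ1 hρ
end
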